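/- Suppose F : (0,∞) → ℂ is smooth and there exist β > −1, an integer ℓ ≥ 0, and an integer M > β+1 such that |F^(k)(λ)| ≤ C λ^(β−k) |log λ|^ℓ for all 0 ≤ k ≤ M on the support of a fixed smooth compactly supported cutoff Φ̃. Then for all ρ, |∫_0^∞ e^{iρλ} F(λ) Φ̃(λ) dλ| ≲ ⟨ρ⟩^(−β−1) ⟨log⟨ρ⟩⟩^ℓ. -/

import Mathlib

open MeasureTheory Real

noncomputable def jap (t : ℝ) : ℝ := Real.sqrt (1 + t ^ 2)

section AuxLemmas
open Set

lemma aux_rpow_integrableOn {p b : ℝ} (hp : -1 < p) (hb : 0 < b) :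
    IntegrableOn (fun l : ℝ => l ^ p) (Ioc 0 b) := by
  have := intervalIntegral.intervalIntegrable_rpow' (a := 0) (b := b) hp
  rwa [intervalIntegrable_iff_integrableOn_Ioc_of_le hb.le] at this

lemma aux_rpow_integral {p b : ℝ} (hp : -1 < p) (hb : 0 < b) :
    ∫ l in Ioc 0 b, l ^ p = b ^ (p + 1) / (p + 1) := by
  rw [← intervalIntegral.integral_of_le hb.le, integral_rpow (Or.inl hp)]
  rw [Real.zero_rpow (by linarith)]
  ring

lemma aux_W_continuousOn (β : ℝ) (ℓ : ℕ) :
    ContinuousOn (fun l : ℝ => l ^ β * |Real.log l| ^ ℓ) (Ioi 0) := by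
  intro x hx
  have hx0 : x ≠ 0 := ne_of_gt hx
  exact ((Real.continuousAt_rpow_const x β (Or.inl hx0)).mul
    (((Real.continuousAt_log hx0).abs).pow ℓ)).continuousWithinAt

lemma aux_add_pow_le {x y : ℝ} (hx : 0 ≤ x) (hy : 0 ≤ y) (l : ℕ) :
    (x + y) ^ l ≤ 2 ^ l * (x ^ l + y ^ l) := by
  have h1 : x + y ≤ 2 * max x y := by
    rcases max_cases x y with ⟨h, h'⟩ | ⟨h, h'⟩ <;> rw [h] <;> linarith
  calc (x + y) ^ l ≤ (2 * max x y) ^ l := pow_le_pow_left₀ (by positivity) h1 l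
    _ = 2 ^ l * (max x y) ^ l := by rw [mul_pow]
    _ ≤ 2 ^ l * (x ^ l + y ^ l) := by
        gcongr
        rcases max_cases x y with ⟨h, _⟩ | ⟨h, _⟩ <;> rw [h] <;>
          nlinarith [pow_nonneg hx l, pow_nonneg hy l]

lemma aux_abs_log_le {lam ε : ℝ} (hlam : 0 < lam) (hε : 0 < ε) :
    |Real.log lam| ≤ (lam ^ ε + lam ^ (-ε)) / ε := by
  rcases abs_cases (Real.log lam) with ⟨h, _⟩ | ⟨h, _⟩ <;> rw [h]
  · calc Real.log lam ≤ lam ^ ε / ε := Real.log_le_rpow_div hlam.le hε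
      _ ≤ (lam ^ ε + lam ^ (-ε)) / ε := by
          have : (0:ℝ) ≤ lam ^ (-ε) := (Real.rpow_pos_of_pos hlam _).le
          gcongr; linarith
  · have := Real.log_le_rpow_div (x := lam⁻¹) (by positivity) hε
    rw [Real.log_inv, Real.inv_rpow hlam.le] at this
    calc -Real.log lam ≤ (lam ^ ε)⁻¹ / ε := this
      _ = lam ^ (-ε) / ε := by rw [← Real.rpow_neg hlam.le]
      _ ≤ (lam ^ ε + lam ^ (-ε)) / ε := by
          have : (0:ℝ) ≤ lam ^ ε := (Real.rpow_pos_of_pos hlam _).le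
          gcongr; linarith

-- pointwise: W λ ≤ (2/ε)^ℓ (λ^(β+εℓ) + λ^(β-εℓ))
lemma aux_W_pointwise {β ε : ℝ} (ℓ : ℕ) (hε : 0 < ε) {lam : ℝ} (hlam : 0 < lam) :
    lam ^ β * |Real.log lam| ^ ℓ ≤
      (2 / ε) ^ ℓ * (lam ^ (β + ε * ℓ) + lam ^ (β - ε * ℓ)) := by
  have h1 : |Real.log lam| ^ ℓ ≤ ((lam ^ ε + lam ^ (-ε)) / ε) ^ ℓ :=
    pow_le_pow_left₀ (abs_nonneg _) (aux_abs_log_le hlam hε) ℓ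
  have e1 : (lam ^ ε) ^ ℓ = lam ^ (ε * (ℓ:ℝ)) := by
    rw [← Real.rpow_natCast (lam ^ ε) ℓ, ← Real.rpow_mul hlam.le]
  have e2 : (lam ^ (-ε)) ^ ℓ = lam ^ (-(ε * (ℓ:ℝ))) := by
    rw [← Real.rpow_natCast (lam ^ (-ε)) ℓ, ← Real.rpow_mul hlam.le, neg_mul]
  have h2 : ((lam ^ ε + lam ^ (-ε)) / ε) ^ ℓ
      ≤ (2 / ε) ^ ℓ * (lam ^ (ε * ℓ) + lam ^ (-(ε * ℓ))) := by
    rw [div_pow, div_le_iff₀ (by positivity)]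
    calc (lam ^ ε + lam ^ (-ε)) ^ ℓ
        ≤ 2 ^ ℓ * ((lam ^ ε) ^ ℓ + (lam ^ (-ε)) ^ ℓ) :=
          aux_add_pow_le (Real.rpow_pos_of_pos hlam _).le (Real.rpow_pos_of_pos hlam _).le ℓ
      _ = (2 / ε) ^ ℓ * (lam ^ (ε * ℓ) + lam ^ (-(ε * ℓ))) * ε ^ ℓ := by
          rw [e1, e2, mul_right_comm, ← mul_pow, div_mul_cancel₀]
          positivity
  have h3 : lam ^ β * |Real.log lam| ^ ℓ
      ≤ lam ^ β * ((2 / ε) ^ ℓ * (lam ^ (ε * ℓ) + lam ^ (-(ε * ℓ)))) := by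
    have := h1.trans h2
    exact mul_le_mul_of_nonneg_left this (Real.rpow_pos_of_pos hlam _).le
  have f1 : lam ^ (β + ε * (ℓ:ℝ)) = lam ^ β * lam ^ (ε * (ℓ:ℝ)) := Real.rpow_add hlam _ _
  have f2 : lam ^ (β - ε * (ℓ:ℝ)) = lam ^ β * lam ^ (-(ε * (ℓ:ℝ))) := by
    rw [sub_eq_add_neg, Real.rpow_add hlam]
  calc lam ^ β * |Real.log lam| ^ ℓ
      ≤ lam ^ β * ((2 / ε) ^ ℓ * (lam ^ (ε * ℓ) + lam ^ (-(ε * ℓ)))) := h3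
    _ = (2 / ε) ^ ℓ * (lam ^ (β + ε * ℓ) + lam ^ (β - ε * ℓ)) := by
        rw [f1, f2]; ring

lemma aux_eps_pos {β : ℝ} (hβ : -1 < β) (ℓ : ℕ) : 0 < (β + 1) / (2 * (ℓ + 1 : ℝ)) := by
  apply div_pos (by linarith) (by positivity)

lemma aux_eps_lt {β : ℝ} (hβ : -1 < β) (ℓ : ℕ) :
    (β + 1) / (2 * (ℓ + 1 : ℝ)) * ℓ < β + 1 := by
  have hD : (0:ℝ) < 2 * (ℓ + 1 : ℝ) := by positivity
  rw [div_mul_eq_mul_div, div_lt_iff₀ hD]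
  nlinarith [Nat.cast_nonneg (α := ℝ) ℓ]

lemma aux_W_integrableOn {β : ℝ} (hβ : -1 < β) (ℓ : ℕ) {b : ℝ} (hb : 0 < b) :
    IntegrableOn (fun l : ℝ => l ^ β * |Real.log l| ^ ℓ) (Ioc 0 b) := by
  set ε : ℝ := (β + 1) / (2 * (ℓ + 1 : ℝ)) with hεdef
  have hε : 0 < ε := aux_eps_pos hβ ℓ
  have hεℓ : ε * ℓ < β + 1 := aux_eps_lt hβ ℓ
  have hεℓ0 : 0 ≤ ε * ℓ := mul_nonneg hε.le (Nat.cast_nonneg ℓ)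
  have hp1 : -1 < β + ε * ℓ := by linarith
  have hp2 : -1 < β - ε * ℓ := by linarith
  apply Integrable.mono'
    (g := fun l : ℝ => (2 / ε) ^ ℓ * (l ^ (β + ε * ℓ) + l ^ (β - ε * ℓ)))
  · exact ((aux_rpow_integrableOn hp1 hb).add (aux_rpow_integrableOn hp2 hb)).const_mul _
  · exact ((aux_W_continuousOn β ℓ).mono Ioc_subset_Ioi_self).aestronglyMeasurable
      measurableSet_Ioc
  · filter_upwards [ae_restrict_mem measurableSet_Ioc] with l hl
    have hl0 : 0 < l := hl.1
    rw [Real.norm_eq_abs, abs_of_nonneg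
      (mul_nonneg (Real.rpow_nonneg hl0.le _) (pow_nonneg (abs_nonneg _) _))]
    exact aux_W_pointwise ℓ hε hl0

lemma aux_small_integral {β : ℝ} (hβ : -1 < β) (ℓ : ℕ) :
    ∃ K, 0 < K ∧ ∀ a : ℝ, 0 < a → a ≤ 1 →
      ∫ l in Ioc 0 a, l ^ β * |Real.log l| ^ ℓ ≤
        K * (a ^ (β + 1) * (1 + (-Real.log a) ^ ℓ)) := by
  set ε : ℝ := (β + 1) / (2 * (ℓ + 1 : ℝ)) with hεdef
  have hε : 0 < ε := aux_eps_pos hβ ℓ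
  have hεℓ : ε * ℓ < β + 1 := aux_eps_lt hβ ℓ
  have hεℓ0 : 0 ≤ ε * ℓ := mul_nonneg hε.le (Nat.cast_nonneg ℓ)
  have hp2 : -1 < β - ε * ℓ := by linarith
  refine ⟨2 ^ ℓ / (β + 1) + (2 / ε) ^ ℓ / (β + 1 - ε * ℓ),
    add_pos (div_pos (by positivity) (by linarith)) (div_pos (by positivity) (by linarith)), ?_⟩
  intro a ha ha1
  have hlog_a : 0 ≤ -Real.log a := by
    simpa using Real.log_nonpos ha.le ha1
  set c1 : ℝ := 2 ^ ℓ * (-Real.log a) ^ ℓ with hc1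
  set c2 : ℝ := (2 / ε) ^ ℓ * a ^ (ε * (ℓ:ℝ)) with hc2
  have hc1p : 0 ≤ c1 := by positivity
  have hc2p : 0 ≤ c2 := by positivity
  -- pointwise bound on Ioc 0 a
  have hpt : ∀ l ∈ Ioc (0:ℝ) a, l ^ β * |Real.log l| ^ ℓ
      ≤ c1 * l ^ β + c2 * l ^ (β - ε * ℓ) := by
    intro l hl
    have hl0 : 0 < l := hl.1
    have hla : l ≤ a := hl.2
    have hlog_l : Real.log l ≤ 0 := Real.log_nonpos hl0.le (hla.trans ha1)
    have hlog_mono : Real.log l ≤ Real.log a := Real.log_le_log hl0 hla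
    have habs : |Real.log l| = (-Real.log a) + (Real.log a - Real.log l) := by
      rw [abs_of_nonpos hlog_l]; ring
    have hsplit : |Real.log l| ^ ℓ ≤
        2 ^ ℓ * ((-Real.log a) ^ ℓ + (Real.log a - Real.log l) ^ ℓ) := by
      rw [habs]
      exact aux_add_pow_le hlog_a (by linarith) ℓ
    have hquot : Real.log a - Real.log l ≤ (a / l) ^ ε / ε := by
      rw [← Real.log_div (ne_of_gt ha) (ne_of_gt hl0)]
      exact Real.log_le_rpow_div (by positivity) hε
    have hquot_pow : (Real.log a - Real.log l) ^ ℓ ≤ ((a / l) ^ ε / ε) ^ ℓ :=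
      pow_le_pow_left₀ (by linarith) hquot ℓ
    have hql : ((a / l) ^ ε / ε) ^ ℓ = (1 / ε) ^ ℓ * (a ^ (ε * (ℓ:ℝ)) * l ^ (-(ε * (ℓ:ℝ)))) := by
      rw [div_pow, ← Real.rpow_natCast ((a/l) ^ ε) ℓ, ← Real.rpow_mul (by positivity),
        Real.div_rpow ha.le hl0.le, Real.rpow_neg hl0.le, one_div, inv_pow]
      ring
    have hWl : l ^ β * |Real.log l| ^ ℓ ≤
        l ^ β * (2 ^ ℓ * ((-Real.log a) ^ ℓ + (1 / ε) ^ ℓ * (a ^ (ε * (ℓ:ℝ)) * l ^ (-(ε * (ℓ:ℝ)))))) := by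
      apply mul_le_mul_of_nonneg_left _ (Real.rpow_nonneg hl0.le _)
      calc |Real.log l| ^ ℓ ≤ 2 ^ ℓ * ((-Real.log a) ^ ℓ + (Real.log a - Real.log l) ^ ℓ) := hsplit
        _ ≤ 2 ^ ℓ * ((-Real.log a) ^ ℓ + (1 / ε) ^ ℓ * (a ^ (ε * (ℓ:ℝ)) * l ^ (-(ε * (ℓ:ℝ))))) := by
            gcongr
            rw [← hql]
            exact hquot_pow
    refine hWl.trans (le_of_eq ?_)
    have : l ^ β * l ^ (-(ε * (ℓ:ℝ))) = l ^ (β - ε * (ℓ:ℝ)) := by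
      rw [← Real.rpow_add hl0]; ring_nf
    have h2e : (2 / ε) ^ ℓ = 2 ^ ℓ * (1 / ε) ^ ℓ := by
      rw [← mul_pow]; ring_nf
    rw [hc1, hc2, h2e, ← this]; ring
  -- integrate the pointwise bound
  have hrint1 : IntegrableOn (fun l : ℝ => c1 * l ^ β) (Ioc 0 a) :=
    (aux_rpow_integrableOn hβ ha).const_mul c1
  have hrint2 : IntegrableOn (fun l : ℝ => c2 * l ^ (β - ε * ℓ)) (Ioc 0 a) :=
    (aux_rpow_integrableOn hp2 ha).const_mul c2
  have hW : IntegrableOn (fun l : ℝ => l ^ β * |Real.log l| ^ ℓ) (Ioc 0 a) :=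
    aux_W_integrableOn hβ ℓ ha
  have hmono := setIntegral_mono_on hW (hrint1.add hrint2) measurableSet_Ioc hpt
  have hval : ∫ l in Ioc 0 a, (c1 * l ^ β + c2 * l ^ (β - ε * ℓ))
      = c1 * (a ^ (β + 1) / (β + 1)) + c2 * (a ^ (β - ε * ℓ + 1) / (β - ε * ℓ + 1)) := by
    rw [integral_add hrint1 hrint2, integral_const_mul, integral_const_mul,
      aux_rpow_integral hβ ha, aux_rpow_integral hp2 ha]
  have hd2 : (0:ℝ) < β - ε * ℓ + 1 := by linarith
  have hsum : a ^ (ε * (ℓ:ℝ)) * a ^ (β - ε * (ℓ:ℝ) + 1) = a ^ (β + 1) := by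
    rw [← Real.rpow_add ha]; ring_nf
  have he : c1 * (a ^ (β + 1) / (β + 1)) + c2 * (a ^ (β - ε * ℓ + 1) / (β - ε * ℓ + 1))
      = a ^ (β + 1) * ((2:ℝ) ^ ℓ * (-Real.log a) ^ ℓ / (β + 1)
          + (2 / ε) ^ ℓ / (β - ε * ℓ + 1)) := by
    rw [hc1, hc2, ← hsum]; ring
  have hP : (0:ℝ) ≤ a ^ (β + 1) := Real.rpow_nonneg ha.le _
  have hX : (0:ℝ) ≤ (-Real.log a) ^ ℓ := pow_nonneg hlog_a ℓ
  have hA : (0:ℝ) ≤ 2 ^ ℓ / (β + 1) := div_nonneg (by positivity) (by linarith)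
  have hB : (0:ℝ) ≤ (2 / ε) ^ ℓ / (β + 1 - ε * ℓ) :=
    div_nonneg (pow_nonneg (div_pos two_pos hε).le ℓ) (by linarith)
  calc ∫ l in Ioc 0 a, l ^ β * |Real.log l| ^ ℓ
      ≤ ∫ l in Ioc 0 a, (c1 * l ^ β + c2 * l ^ (β - ε * ℓ)) := by
        simpa only [Pi.add_apply] using hmono
    _ = a ^ (β + 1) * ((2:ℝ) ^ ℓ * (-Real.log a) ^ ℓ / (β + 1)
          + (2 / ε) ^ ℓ / (β - ε * ℓ + 1)) := by rw [hval, he]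
    _ ≤ (2 ^ ℓ / (β + 1) + (2 / ε) ^ ℓ / (β + 1 - ε * ℓ))
          * (a ^ (β + 1) * (1 + (-Real.log a) ^ ℓ)) := by
        have h1 : (2:ℝ) ^ ℓ * (-Real.log a) ^ ℓ / (β + 1)
            = (2 ^ ℓ / (β + 1)) * (-Real.log a) ^ ℓ := by ring
        have h2 : (2 / ε) ^ ℓ / (β - ε * ℓ + 1) = (2 / ε) ^ ℓ / (β + 1 - ε * ℓ) := by
          ring_nf
        rw [h1, h2]
        nlinarith [mul_nonneg hP (add_nonneg hA (mul_nonneg hB hX)),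
          mul_nonneg hP hX, mul_nonneg hP hA, mul_nonneg hP hB]

lemma aux_norm_e (ρ l : ℝ) : ‖Complex.exp (Complex.I * ρ * l)‖ = 1 := by
  rw [Complex.norm_exp]; simp

lemma aux_hasDerivAt_e (ρ x : ℝ) :
    HasDerivAt (fun l : ℝ => Complex.exp (Complex.I * ρ * l))
      (Complex.I * ρ * Complex.exp (Complex.I * ρ * x)) x := by
  have h1 : HasDerivAt (fun l : ℝ => (l : ℂ)) 1 x := Complex.ofRealCLM.hasDerivAt
  have h2 : HasDerivAt (fun l : ℝ => Complex.I * ρ * (l : ℂ)) (Complex.I * ρ) x := by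
    simpa using h1.const_mul (Complex.I * ρ)
  simpa [mul_comm] using h2.cexp

lemma aux_cont_e (ρ : ℝ) : Continuous (fun l : ℝ => Complex.exp (Complex.I * ρ * l)) :=
  Complex.continuous_exp.comp (continuous_const.mul Complex.continuous_ofReal)

lemma ibp_step {ρ a b R : ℝ} (hρ : ρ ≠ 0) {g : ℝ → ℂ}
    (hg : ContDiffOn ℝ (⊤ : ℕ∞) g (Set.Ioi 0)) (hgR : ∀ l, R < l → g l = 0)
    (ha : 0 < a) (hab : a ≤ b) (hRb : R < b) :
    ∫ l in a..b, Complex.exp (Complex.I * ρ * l) * g l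
      = -((Complex.I * ρ)⁻¹ * (g a * Complex.exp (Complex.I * ρ * a)))
        - (Complex.I * ρ)⁻¹ * ∫ l in a..b, Complex.exp (Complex.I * ρ * l) * deriv g l := by
  have hIρ : Complex.I * ρ ≠ 0 := by
    simp [Complex.I_ne_zero, Complex.ofReal_eq_zero, hρ]
  have hsub : Set.uIcc a b ⊆ Set.Ioi 0 := by
    rw [Set.uIcc_of_le hab]
    exact fun x hx => lt_of_lt_of_le ha hx.1
  have hu : ∀ x ∈ Set.uIcc a b, HasDerivAt g (deriv g x) x := fun x hx =>
    ((hg.contDiffAt (isOpen_Ioi.mem_nhds (hsub hx))).differentiableAt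
      (by norm_num)).hasDerivAt
  have hv : ∀ x ∈ Set.uIcc a b,
      HasDerivAt (fun l : ℝ => (Complex.I * ρ)⁻¹ * Complex.exp (Complex.I * ρ * l))
        (Complex.exp (Complex.I * ρ * x)) x := by
    intro x _
    have := (aux_hasDerivAt_e ρ x).const_mul (Complex.I * ρ)⁻¹
    have he : (Complex.I * ρ)⁻¹ * (Complex.I * ρ * Complex.exp (Complex.I * ρ * x))
        = Complex.exp (Complex.I * ρ * x) := by
      rw [← mul_assoc, inv_mul_cancel₀ hIρ, one_mul]
    rwa [he] at this
  have hg' : ContinuousOn (deriv g) (Set.uIcc a b) :=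
    ((hg.deriv_of_isOpen (m := (⊤ : ℕ∞)) isOpen_Ioi (by simp)).continuousOn).mono hsub
  have hu' : IntervalIntegrable (deriv g) volume a b := hg'.intervalIntegrable
  have hv' : IntervalIntegrable (fun l : ℝ => Complex.exp (Complex.I * ρ * l)) volume a b :=
    (aux_cont_e ρ).intervalIntegrable _ _
  have H := intervalIntegral.integral_mul_deriv_eq_deriv_mul hu hv hu' hv'
  have hgb : g b = 0 := hgR b hRb
  have hL : ∫ l in a..b, Complex.exp (Complex.I * ρ * l) * g l
      = ∫ l in a..b, g l * Complex.exp (Complex.I * ρ * l) := by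
    apply intervalIntegral.integral_congr
    intro x _; exact mul_comm _ _
  have hR2 : ∫ l in a..b, deriv g l * ((Complex.I * ρ)⁻¹ * Complex.exp (Complex.I * ρ * l))
      = (Complex.I * ρ)⁻¹ * ∫ l in a..b, Complex.exp (Complex.I * ρ * l) * deriv g l := by
    rw [← intervalIntegral.integral_const_mul]
    apply intervalIntegral.integral_congr
    intro x _; ring
  rw [hL, H, hgb, hR2]
  ring

lemma aux_norm_inv (ρ : ℝ) : ‖(Complex.I * ρ)⁻¹‖ = |ρ|⁻¹ := by simp

lemma aux_deriv_zero {g : ℝ → ℂ} {R : ℝ} (hgR : ∀ l, R < l → g l = 0) :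
    ∀ l, R < l → deriv g l = 0 := by
  intro l hl
  have hev : g =ᶠ[nhds l] (fun _ => (0:ℂ)) :=
    Filter.eventuallyEq_of_mem (isOpen_Ioi.mem_nhds hl) (fun x hx => hgR x hx)
  rw [hev.deriv_eq]
  simp

lemma ibp_iter {ρ R b : ℝ} (hρ : ρ ≠ 0) (hRb : R < b) (m : ℕ) :
    ∀ (g : ℝ → ℂ), ContDiffOn ℝ (⊤ : ℕ∞) g (Set.Ioi 0) → (∀ l, R < l → g l = 0) →
      ∀ a, 0 < a → a ≤ b →
      ‖∫ l in a..b, Complex.exp (Complex.I * ρ * l) * g l‖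
        ≤ (∑ k ∈ Finset.range m, |ρ|⁻¹ ^ (k+1) * ‖iteratedDeriv k g a‖)
          + |ρ|⁻¹ ^ m * ∫ l in a..b, ‖iteratedDeriv m g l‖ := by
  induction m with
  | zero =>
      intro g hg hgR a ha hab
      simp only [Finset.range_zero, Finset.sum_empty, pow_zero, one_mul, zero_add,
        iteratedDeriv_zero]
      calc ‖∫ l in a..b, Complex.exp (Complex.I * ρ * l) * g l‖
          ≤ ∫ l in a..b, ‖Complex.exp (Complex.I * ρ * l) * g l‖ :=
            intervalIntegral.norm_integral_le_integral_norm hab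
        _ = ∫ l in a..b, ‖g l‖ := by
            apply intervalIntegral.integral_congr
            intro x _
            simp only [norm_mul, aux_norm_e, one_mul]
  | succ m ih =>
      intro g hg hgR a ha hab
      have hg' : ContDiffOn ℝ (⊤ : ℕ∞) (deriv g) (Set.Ioi 0) :=
        hg.deriv_of_isOpen (m := (⊤ : ℕ∞)) isOpen_Ioi (by simp)
      have hgR' := aux_deriv_zero hgR
      have step := ibp_step hρ hg hgR ha hab hRb
      have hIH := ih (deriv g) hg' hgR' a ha hab
      have hnorm1 : ‖∫ l in a..b, Complex.exp (Complex.I * ρ * l) * g l‖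
          ≤ |ρ|⁻¹ * ‖g a‖
            + |ρ|⁻¹ * ‖∫ l in a..b, Complex.exp (Complex.I * ρ * l) * deriv g l‖ := by
        rw [step]
        refine (norm_sub_le _ _).trans ?_
        rw [norm_neg, norm_mul, norm_mul, norm_mul, aux_norm_inv, aux_norm_e, mul_one]
      have hρinv : (0:ℝ) ≤ |ρ|⁻¹ := by positivity
      have h2 : |ρ|⁻¹ * ‖∫ l in a..b, Complex.exp (Complex.I * ρ * l) * deriv g l‖
          ≤ |ρ|⁻¹ * ((∑ k ∈ Finset.range m, |ρ|⁻¹ ^ (k+1) * ‖iteratedDeriv k (deriv g) a‖)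
              + |ρ|⁻¹ ^ m * ∫ l in a..b, ‖iteratedDeriv m (deriv g) l‖) :=
        mul_le_mul_of_nonneg_left hIH hρinv
      have hfin : |ρ|⁻¹ * ‖g a‖
          + |ρ|⁻¹ * ((∑ k ∈ Finset.range m, |ρ|⁻¹ ^ (k+1) * ‖iteratedDeriv k (deriv g) a‖)
              + |ρ|⁻¹ ^ m * ∫ l in a..b, ‖iteratedDeriv m (deriv g) l‖)
          = (∑ k ∈ Finset.range (m+1), |ρ|⁻¹ ^ (k+1) * ‖iteratedDeriv k g a‖)
            + |ρ|⁻¹ ^ (m+1) * ∫ l in a..b, ‖iteratedDeriv (m+1) g l‖ := by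
        simp only [← iteratedDeriv_succ']
        rw [Finset.sum_range_succ', iteratedDeriv_zero, mul_add, Finset.mul_sum]
        have : ∑ k ∈ Finset.range m, |ρ|⁻¹ * (|ρ|⁻¹ ^ (k+1) * ‖iteratedDeriv (k+1) g a‖)
            = ∑ k ∈ Finset.range m, |ρ|⁻¹ ^ (k+1+1) * ‖iteratedDeriv (k+1) g a‖ := by
          apply Finset.sum_congr rfl
          intro k _
          ring
        rw [this]
        ring
      linarith [hnorm1, h2, le_of_eq hfin]

lemma aux_G_bound (F : ℝ → ℂ) (Φ : ℝ → ℝ) (β : ℝ) (ℓ M : ℕ) (C Cφ : ℝ)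
    (hC : 0 < C) (hCφ : 0 < Cφ)
    (hF : ContDiffOn ℝ (⊤ : ℕ∞) F (Set.Ioi 0))
    (hΦsmooth : ContDiff ℝ (⊤ : ℕ∞) Φ)
    (hFk : ∀ k ≤ M, ∀ lam : ℝ, 0 < lam → lam ∈ tsupport Φ →
        ‖iteratedDeriv k F lam‖ ≤ C * lam ^ (β - (k : ℝ)) * |Real.log lam| ^ ℓ)
    (hΦk : ∀ k ≤ M, ∀ lam : ℝ, 0 < lam →
        |iteratedDeriv k Φ lam| ≤ Cφ * lam ^ (-(k : ℝ))) :
    ∀ k ≤ M, ∀ l : ℝ, 0 < l →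
      ‖iteratedDeriv k (fun x => F x * (Φ x : ℂ)) l‖
        ≤ (C * Cφ * 2 ^ M) * (l ^ (β - (k : ℝ)) * |Real.log l| ^ ℓ) := by
  intro k hk l hl
  set G : ℝ → ℂ := fun x => F x * (Φ x : ℂ) with hGdef
  have hWnn : (0:ℝ) ≤ l ^ (β - (k : ℝ)) * |Real.log l| ^ ℓ :=
    mul_nonneg (Real.rpow_nonneg hl.le _) (pow_nonneg (abs_nonneg _) _)
  by_cases hsupp : l ∈ tsupport Φ
  · -- Leibniz
    set Ψ : ℝ → ℂ := fun x => (Φ x : ℂ) with hΨdef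
    have hΨ : ContDiff ℝ (⊤ : ℕ∞) Ψ := Complex.ofRealCLM.contDiff.comp hΦsmooth
    have hΨnorm : ∀ i, ‖iteratedDeriv i Ψ l‖ = |iteratedDeriv i Φ l| := by
      intro i
      rw [← norm_iteratedFDeriv_eq_norm_iteratedDeriv]
      have := Complex.ofRealLI.norm_iteratedFDeriv_comp_left
        (f := Φ) hΦsmooth.contDiffAt (x := l) (i := i) (by exact_mod_cast (le_top : (i : ℕ∞) ≤ ⊤))
      rw [show (Complex.ofRealLI ∘ Φ) = Ψ from rfl] at this
      rw [this, norm_iteratedFDeriv_eq_norm_iteratedDeriv, Real.norm_eq_abs]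
    have hleib := norm_iteratedFDerivWithin_mul_le (𝕜 := ℝ)
      (f := F) (g := Ψ) (N := ((⊤ : ℕ∞) : WithTop ℕ∞)) hF (hΨ.contDiffOn) (uniqueDiffOn_Ioi 0)
      (Set.mem_Ioi.mpr hl) (n := k) (by exact_mod_cast (le_top : (k : ℕ∞) ≤ ⊤))
    -- convert within to global
    have hconv : ∀ (f : ℝ → ℂ) (i : ℕ),
        ‖iteratedFDerivWithin ℝ i f (Set.Ioi 0) l‖ = ‖iteratedDeriv i f l‖ := by
      intro f i
      rw [iteratedFDerivWithin_of_isOpen i isOpen_Ioi (Set.mem_Ioi.mpr hl),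
        norm_iteratedFDeriv_eq_norm_iteratedDeriv]
    rw [← norm_iteratedFDeriv_eq_norm_iteratedDeriv,
      ← iteratedFDerivWithin_of_isOpen k isOpen_Ioi (Set.mem_Ioi.mpr hl)]
    refine hleib.trans ?_
    have hterm : ∀ i ∈ Finset.range (k+1),
        (k.choose i : ℝ) * ‖iteratedFDerivWithin ℝ i F (Set.Ioi 0) l‖ *
          ‖iteratedFDerivWithin ℝ (k-i) Ψ (Set.Ioi 0) l‖
        ≤ (k.choose i : ℝ) * (C * Cφ * (l ^ (β - (k : ℝ)) * |Real.log l| ^ ℓ)) := by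
      intro i hi
      have hik : i ≤ k := Nat.lt_succ_iff.mp (Finset.mem_range.mp hi)
      have h1 : ‖iteratedFDerivWithin ℝ i F (Set.Ioi 0) l‖
          ≤ C * l ^ (β - (i : ℝ)) * |Real.log l| ^ ℓ := by
        rw [hconv]
        exact hFk i (hik.trans hk) l hl hsupp
      have h2 : ‖iteratedFDerivWithin ℝ (k-i) Ψ (Set.Ioi 0) l‖
          ≤ Cφ * l ^ (-((k-i : ℕ) : ℝ)) := by
        rw [hconv, hΨnorm]
        exact hΦk (k-i) ((Nat.sub_le k i).trans hk) l hl
      have hmul : C * l ^ (β - (i : ℝ)) * |Real.log l| ^ ℓ * (Cφ * l ^ (-((k-i : ℕ) : ℝ)))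
          = C * Cφ * (l ^ (β - (k : ℝ)) * |Real.log l| ^ ℓ) := by
        have hcast : ((k - i : ℕ) : ℝ) = (k : ℝ) - (i : ℝ) := Nat.cast_sub hik
        rw [hcast]
        have : l ^ (β - (i : ℝ)) * l ^ (-((k:ℝ) - (i:ℝ))) = l ^ (β - (k : ℝ)) := by
          rw [← Real.rpow_add hl]; ring_nf
        rw [← this]; ring
      calc (k.choose i : ℝ) * ‖iteratedFDerivWithin ℝ i F (Set.Ioi 0) l‖ *
            ‖iteratedFDerivWithin ℝ (k-i) Ψ (Set.Ioi 0) l‖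
          ≤ (k.choose i : ℝ) * (C * l ^ (β - (i : ℝ)) * |Real.log l| ^ ℓ) *
            (Cφ * l ^ (-((k-i : ℕ) : ℝ))) := by
            apply mul_le_mul (mul_le_mul_of_nonneg_left h1 (Nat.cast_nonneg _)) h2
              (norm_nonneg _)
            positivity
        _ = (k.choose i : ℝ) * (C * Cφ * (l ^ (β - (k : ℝ)) * |Real.log l| ^ ℓ)) := by
            rw [mul_assoc ((k.choose i : ℝ)), hmul]
    refine (Finset.sum_le_sum hterm).trans ?_
    rw [← Finset.sum_mul]
    have hchoose : ∑ i ∈ Finset.range (k+1), (k.choose i : ℝ) = 2 ^ k := by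
      exact_mod_cast congrArg (Nat.cast : ℕ → ℝ) (Nat.sum_range_choose k)
    rw [hchoose]
    have h2k : (2:ℝ) ^ k ≤ 2 ^ M := pow_le_pow_right₀ one_le_two hk
    calc (2:ℝ) ^ k * (C * Cφ * (l ^ (β - (k : ℝ)) * |Real.log l| ^ ℓ))
        ≤ (2:ℝ) ^ M * (C * Cφ * (l ^ (β - (k : ℝ)) * |Real.log l| ^ ℓ)) := by
          apply mul_le_mul_of_nonneg_right h2k
          positivity
      _ = (C * Cφ * 2 ^ M) * (l ^ (β - (k : ℝ)) * |Real.log l| ^ ℓ) := by ring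
  · -- off the support of Φ
    have hzero : G =ᶠ[nhds l] (fun _ => (0:ℂ)) := by
      have hopen : IsOpen (tsupport Φ)ᶜ := (isClosed_tsupport Φ).isOpen_compl
      refine Filter.eventuallyEq_of_mem (hopen.mem_nhds hsupp) ?_
      intro x hx
      simp [hGdef, image_eq_zero_of_notMem_tsupport hx]
    have : iteratedDeriv k G l = 0 := by
      rw [hzero.iteratedDeriv_eq k, iteratedDeriv_eq_iteratedFDeriv, iteratedFDeriv_zero_fun]
      simp
    rw [this, norm_zero]
    positivity

lemma jap_pos (t : ℝ) : 0 < jap t := Real.sqrt_pos.mpr (by positivity)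

lemma jap_one_le (t : ℝ) : 1 ≤ jap t := by
  have : Real.sqrt 1 ≤ jap t := Real.sqrt_le_sqrt (by nlinarith)
  simpa using this

lemma abs_le_jap (t : ℝ) : |t| ≤ jap t := by
  rw [jap, ← Real.sqrt_sq_eq_abs]
  exact Real.sqrt_le_sqrt (by nlinarith)

lemma jap_le_sqrt_two {t : ℝ} (h : |t| ≤ 1) : jap t ≤ Real.sqrt 2 := by
  apply Real.sqrt_le_sqrt
  nlinarith [sq_abs t, abs_nonneg t]

lemma jap_le_sqrt_two_mul {t : ℝ} (h : 1 ≤ |t|) : jap t ≤ Real.sqrt 2 * |t| := by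
  rw [jap, show Real.sqrt 2 * |t| = Real.sqrt 2 * Real.sqrt (t^2) by rw [Real.sqrt_sq_eq_abs],
    ← Real.sqrt_mul (by norm_num)]
  apply Real.sqrt_le_sqrt
  nlinarith [sq_abs t]

end AuxLemmas

section Main
open Set MeasureTheory

lemma aux_contOn_iteratedDeriv {g : ℝ → ℂ} (hg : ContDiffOn ℝ (⊤ : ℕ∞) g (Set.Ioi 0)) (m : ℕ) :
    ContinuousOn (iteratedDeriv m g) (Set.Ioi 0) := by
  have h1 := hg.continuousOn_iteratedDerivWithin (m := m) (by exact_mod_cast le_top) (uniqueDiffOn_Ioi 0)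
  apply h1.congr
  intro x hx
  rw [iteratedDerivWithin_eq_iteratedFDerivWithin, iteratedDeriv_eq_iteratedFDeriv,
    iteratedFDerivWithin_of_isOpen m isOpen_Ioi hx]

set_option maxHeartbeats 1000000 in
lemma main_est (G : ℝ → ℂ) (β : ℝ) (ℓ M : ℕ) (D : ℝ)
    (hβ : -1 < β) (hM : β + 1 < (M : ℝ)) (hD : 0 < D)
    (hG : ContDiffOn ℝ (⊤ : ℕ∞) G (Set.Ioi 0)) (R : ℝ) (hR1 : 1 ≤ R)
    (hGR : ∀ l, R < l → G l = 0)
    (hGk : ∀ k ≤ M, ∀ l : ℝ, 0 < l →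
      ‖iteratedDeriv k G l‖ ≤ D * (l ^ (β - (k : ℝ)) * |Real.log l| ^ ℓ)) :
    ∃ C' : ℝ, 0 < C' ∧ ∀ ρ : ℝ,
      ‖∫ lam in Set.Ioi (0:ℝ), Complex.exp (Complex.I * ρ * lam) * G lam‖
        ≤ C' * jap ρ ^ (-β - 1) * jap (Real.log (jap ρ)) ^ ℓ := by
  set b : ℝ := R + 1 with hbdef
  have hRb : R < b := lt_add_one R
  have hb1 : (1:ℝ) < b := by simp only [hbdef]; linarith
  have hb0 : (0:ℝ) < b := by linarith
  have hlogb : 0 < Real.log b := Real.log_pos hb1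
  have hMβ : (0:ℝ) < (M:ℝ) - β - 1 := by linarith
  obtain ⟨K, hK, hKa⟩ := aux_small_integral hβ ℓ
  set J : ℝ := ∫ l in Ioc (0:ℝ) b, l ^ β * |Real.log l| ^ ℓ with hJdef
  have hJ0 : 0 ≤ J := setIntegral_nonneg measurableSet_Ioc
    (fun l hl => mul_nonneg (Real.rpow_nonneg hl.1.le _) (pow_nonneg (abs_nonneg _) _))
  set cst : ℝ := Real.sqrt 2 ^ (β + 1) with hcstdef
  have hsqrt2 : (0:ℝ) < Real.sqrt 2 := by positivity
  have hcst0 : 0 < cst := Real.rpow_pos_of_pos hsqrt2 _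
  set C0 : ℝ := D * J * cst + 1 with hC0def
  set C1 : ℝ := 2 * (D * K) * cst with hC1def
  set C2 : ℝ := M * D * cst with hC2def
  set C3 : ℝ := D * (1 + Real.log b) ^ ℓ / ((M:ℝ) - β - 1) * cst with hC3def
  have hDJc : 0 ≤ D * J * cst := by positivity
  have hC0 : 1 ≤ C0 := by simp only [hC0def]; linarith
  have hC1 : 0 ≤ C1 := by positivity
  have hC2 : 0 ≤ C2 := by positivity
  have hC3 : 0 ≤ C3 := by
    apply mul_nonneg (div_nonneg (mul_nonneg hD.le (pow_nonneg (by linarith) _)) hMβ.le) hcst0.le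
  refine ⟨C0 + C1 + C2 + C3, by linarith, ?_⟩
  intro ρ
  set Q : ℝ := jap ρ ^ (-β - 1) with hQdef
  set P : ℝ := jap (Real.log (jap ρ)) with hPdef
  have hjap0 : 0 < jap ρ := jap_pos ρ
  have hjap1 : 1 ≤ jap ρ := jap_one_le ρ
  have hQ0 : 0 < Q := Real.rpow_pos_of_pos hjap0 _
  have hP1 : 1 ≤ P := jap_one_le _
  have hPl1 : 1 ≤ P ^ ℓ := one_le_pow₀ hP1
  have hPl0 : 0 ≤ P ^ ℓ := by linarith
  have hljP : Real.log (jap ρ) ≤ P := (le_abs_self _).trans (abs_le_jap _)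
  have hGcont : ContinuousOn G (Set.Ioi 0) := hG.continuousOn
  have hfcont : ContinuousOn (fun l : ℝ => Complex.exp (Complex.I * ρ * l) * G l) (Set.Ioi 0) :=
    ((aux_cont_e ρ).continuousOn).mul hGcont
  have hG0 : ∀ l : ℝ, 0 < l → ‖G l‖ ≤ D * (l ^ β * |Real.log l| ^ ℓ) := by
    intro l hl
    have := hGk 0 (Nat.zero_le M) l hl
    simpa using this
  have hfint : ∀ c : ℝ, 0 < c →
      IntegrableOn (fun l : ℝ => Complex.exp (Complex.I * ρ * l) * G l) (Ioc 0 c) := by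
    intro c hc
    apply Integrable.mono' ((aux_W_integrableOn hβ ℓ hc).const_mul D)
      ((hfcont.mono Ioc_subset_Ioi_self).aestronglyMeasurable measurableSet_Ioc)
    filter_upwards [ae_restrict_mem measurableSet_Ioc] with l hl
    rw [norm_mul, aux_norm_e, one_mul]
    exact hG0 l hl.1
  have hf_eq0 : EqOn (fun l : ℝ => Complex.exp (Complex.I * ρ * l) * G l)
      (fun _ => (0:ℂ)) (Ioi b) := by
    intro l hl
    simp [hGR l (hRb.trans hl)]
  have hIoi : (∫ lam in Set.Ioi (0:ℝ), Complex.exp (Complex.I * ρ * lam) * G lam)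
      = ∫ lam in Ioc (0:ℝ) b, Complex.exp (Complex.I * ρ * lam) * G lam := by
    rw [← Ioc_union_Ioi_eq_Ioi hb0.le,
      setIntegral_union Ioc_disjoint_Ioi_same measurableSet_Ioi (hfint b hb0)
        ((integrableOn_congr_fun hf_eq0 measurableSet_Ioi).mpr (integrableOn_zero))]
    rw [setIntegral_congr_fun measurableSet_Ioi hf_eq0]
    simp
  have hsmall : ∀ a : ℝ, 0 < a → a ≤ 1 →
      ‖∫ lam in Ioc (0:ℝ) a, Complex.exp (Complex.I * ρ * lam) * G lam‖
        ≤ D * K * (a ^ (β+1) * (1 + (-Real.log a) ^ ℓ)) := by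
    intro a ha ha1
    have hn1 : ‖∫ lam in Ioc (0:ℝ) a, Complex.exp (Complex.I * ρ * lam) * G lam‖
        ≤ ∫ lam in Ioc (0:ℝ) a, D * (lam ^ β * |Real.log lam| ^ ℓ) := by
      apply norm_integral_le_of_norm_le ((aux_W_integrableOn hβ ℓ ha).const_mul D)
      filter_upwards [ae_restrict_mem measurableSet_Ioc] with l hl
      rw [norm_mul, aux_norm_e, one_mul]
      exact hG0 l hl.1
    refine hn1.trans ?_
    rw [integral_const_mul]
    calc D * ∫ lam in Ioc (0:ℝ) a, lam ^ β * |Real.log lam| ^ ℓ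
        ≤ D * (K * (a ^ (β+1) * (1 + (-Real.log a) ^ ℓ))) :=
          mul_le_mul_of_nonneg_left (hKa a ha ha1) hD.le
      _ = D * K * (a ^ (β+1) * (1 + (-Real.log a) ^ ℓ)) := by ring
  rcases le_or_gt |ρ| 1 with hsm | hlg
  · -- low frequency
    have hjle : jap ρ ≤ Real.sqrt 2 := jap_le_sqrt_two hsm
    have h1 : (1:ℝ) ≤ cst * Q := by
      have h2 : Real.sqrt 2 ^ (-β-1) ≤ Q :=
        Real.rpow_le_rpow_of_nonpos hjap0 hjle (by linarith)
      have h3 : cst * Real.sqrt 2 ^ (-β-1) = 1 := by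
        rw [hcstdef, ← Real.rpow_add hsqrt2]
        norm_num
      calc (1:ℝ) = cst * Real.sqrt 2 ^ (-β-1) := h3.symm
        _ ≤ cst * Q := mul_le_mul_of_nonneg_left h2 hcst0.le
    have hnorm : ‖∫ lam in Set.Ioi (0:ℝ), Complex.exp (Complex.I * ρ * lam) * G lam‖
        ≤ D * J := by
      rw [hIoi]
      have hn1 : ‖∫ lam in Ioc (0:ℝ) b, Complex.exp (Complex.I * ρ * lam) * G lam‖
          ≤ ∫ lam in Ioc (0:ℝ) b, D * (lam ^ β * |Real.log lam| ^ ℓ) := by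
        apply norm_integral_le_of_norm_le ((aux_W_integrableOn hβ ℓ hb0).const_mul D)
        filter_upwards [ae_restrict_mem measurableSet_Ioc] with l hl
        rw [norm_mul, aux_norm_e, one_mul]
        exact hG0 l hl.1
      refine hn1.trans ?_
      rw [integral_const_mul]
    have s1 : D * J ≤ D * J * (cst * Q) :=
      le_mul_of_one_le_right (mul_nonneg hD.le hJ0) h1
    have s2 : D * J * (cst * Q) ≤ D * J * (cst * Q) * P ^ ℓ :=
      le_mul_of_one_le_right (by positivity) hPl1
    calc ‖∫ lam in Set.Ioi (0:ℝ), Complex.exp (Complex.I * ρ * lam) * G lam‖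
        ≤ D * J := hnorm
      _ ≤ D * J * (cst * Q) * P ^ ℓ := s1.trans s2
      _ = (D * J * cst) * Q * P ^ ℓ := by ring
      _ ≤ (C0 + C1 + C2 + C3) * Q * P ^ ℓ := by
          apply mul_le_mul_of_nonneg_right (mul_le_mul_of_nonneg_right ?_ hQ0.le) hPl0
          simp only [hC0def]
          linarith
  · -- high frequency
    have hρ0 : ρ ≠ 0 := by
      intro h
      rw [h] at hlg
      simp at hlg
      linarith
    have hρabs : 0 < |ρ| := by linarith
    set a : ℝ := |ρ|⁻¹ with hadef
    have ha : 0 < a := by positivity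
    have ha1 : a ≤ 1 := by
      rw [hadef]
      exact inv_le_one_of_one_le₀ hlg.le
    have hab : a ≤ b := ha1.trans hb1.le
    set La : ℝ := -Real.log a with hLadef
    have hLa0 : 0 ≤ La := by
      simp only [hLadef]
      have := Real.log_nonpos ha.le ha1
      linarith
    have hLaeq : La = Real.log |ρ| := by
      simp only [hLadef, hadef, Real.log_inv]
      ring
    have habs_loga : |Real.log a| = La := by
      simp only [hLadef]
      exact abs_of_nonpos (Real.log_nonpos ha.le ha1)
    have hlogρP : Real.log |ρ| ≤ P := by
      have h1 : Real.log |ρ| ≤ Real.log (jap ρ) := Real.log_le_log hρabs (abs_le_jap ρ)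
      exact h1.trans hljP
    have hLaP : La ≤ P := by rw [hLaeq]; exact hlogρP
    have hLaPl : La ^ ℓ ≤ P ^ ℓ := pow_le_pow_left₀ hLa0 hLaP ℓ
    have hLal0 : 0 ≤ La ^ ℓ := pow_nonneg hLa0 ℓ
    -- a^(β+1) ≤ cst * Q
    have hZ : a ^ (β+1) ≤ cst * Q := by
      have hjap2 : jap ρ ≤ Real.sqrt 2 * |ρ| := jap_le_sqrt_two_mul hlg.le
      have h2 : (Real.sqrt 2 * |ρ|) ^ (-β-1) ≤ Q :=
        Real.rpow_le_rpow_of_nonpos hjap0 hjap2 (by linarith)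
      have h3 : a ^ (β+1) = |ρ| ^ (-β-1) := by
        rw [hadef, Real.inv_rpow (abs_nonneg ρ), ← Real.rpow_neg (abs_nonneg ρ)]
        ring_nf
      have h4 : (Real.sqrt 2 * |ρ|) ^ (-β-1)
          = Real.sqrt 2 ^ (-β-1) * |ρ| ^ (-β-1) := Real.mul_rpow hsqrt2.le (abs_nonneg ρ)
      have h5 : cst * Real.sqrt 2 ^ (-β-1) = 1 := by
        rw [hcstdef, ← Real.rpow_add hsqrt2]
        norm_num
      calc a ^ (β+1) = |ρ| ^ (-β-1) := h3
        _ = (cst * Real.sqrt 2 ^ (-β-1)) * |ρ| ^ (-β-1) := by rw [h5, one_mul]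
        _ = cst * (Real.sqrt 2 * |ρ|) ^ (-β-1) := by rw [h4]; ring
        _ ≤ cst * Q := mul_le_mul_of_nonneg_left h2 hcst0.le
    have hA0 : 0 ≤ a ^ (β+1) := Real.rpow_nonneg ha.le _
    -- split the integral
    have hsub1 : Ioc (0:ℝ) a ⊆ Ioc (0:ℝ) b := Ioc_subset_Ioc_right hab
    have hsub2 : Ioc a b ⊆ Ioc (0:ℝ) b := Ioc_subset_Ioc_left ha.le
    have hsplit : (∫ lam in Ioc (0:ℝ) b, Complex.exp (Complex.I * ρ * lam) * G lam)
        = (∫ lam in Ioc (0:ℝ) a, Complex.exp (Complex.I * ρ * lam) * G lam)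
          + ∫ lam in a..b, Complex.exp (Complex.I * ρ * lam) * G lam := by
      rw [intervalIntegral.integral_of_le hab, ← Ioc_union_Ioc_eq_Ioc ha.le hab,
        setIntegral_union (Ioc_disjoint_Ioc_of_le le_rfl) measurableSet_Ioc
          ((hfint b hb0).mono_set hsub1) ((hfint b hb0).mono_set hsub2)]
    -- boundary terms
    have hbd : ∀ k ∈ Finset.range M, |ρ|⁻¹ ^ (k+1) * ‖iteratedDeriv k G a‖
        ≤ D * (a ^ (β+1) * La ^ ℓ) := by
      intro k hk
      have hkM : k ≤ M := (Finset.mem_range.mp hk).le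
      have h1 : ‖iteratedDeriv k G a‖ ≤ D * (a ^ (β - (k:ℝ)) * La ^ ℓ) := by
        have := hGk k hkM a ha
        rwa [habs_loga] at this
      have hpow : |ρ|⁻¹ ^ (k+1) = a ^ (((k:ℝ))+1) := by
        rw [hadef, ← Real.rpow_natCast (|ρ|⁻¹) (k+1)]
        push_cast
        ring_nf
      have hcomb : a ^ (((k:ℝ))+1) * a ^ (β - (k:ℝ)) = a ^ (β+1) := by
        rw [← Real.rpow_add ha]
        ring_nf
      calc |ρ|⁻¹ ^ (k+1) * ‖iteratedDeriv k G a‖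
          ≤ a ^ (((k:ℝ))+1) * (D * (a ^ (β - (k:ℝ)) * La ^ ℓ)) := by
            rw [hpow]
            exact mul_le_mul_of_nonneg_left h1 (Real.rpow_nonneg ha.le _)
        _ = D * ((a ^ (((k:ℝ))+1) * a ^ (β - (k:ℝ))) * La ^ ℓ) := by ring
        _ = D * (a ^ (β+1) * La ^ ℓ) := by rw [hcomb]
    have hsum : (∑ k ∈ Finset.range M, |ρ|⁻¹ ^ (k+1) * ‖iteratedDeriv k G a‖)
        ≤ M * (D * (a ^ (β+1) * La ^ ℓ)) := by
      refine (Finset.sum_le_sum hbd).trans ?_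
      rw [Finset.sum_const, Finset.card_range, nsmul_eq_mul]
    -- tail
    set p : ℝ := β - (M:ℝ) with hpdef
    have hp1 : p + 1 < 0 := by simp only [hpdef]; linarith
    have hIccIoi : Icc a b ⊆ Set.Ioi (0:ℝ) := fun x hx => lt_of_lt_of_le ha hx.1
    have hLb : ∀ l ∈ Icc a b, |Real.log l| ≤ La + Real.log b := by
      intro l hl
      have hl0 : 0 < l := lt_of_lt_of_le ha hl.1
      rw [abs_le]
      constructor
      · have h1 : Real.log a ≤ Real.log l := Real.log_le_log ha hl.1
        simp only [hLadef] at *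
        linarith
      · have h1 : Real.log l ≤ Real.log b := Real.log_le_log hl0 hl.2
        linarith
    have htail_pt : ∀ l ∈ Icc a b, ‖iteratedDeriv M G l‖
        ≤ D * (La + Real.log b) ^ ℓ * l ^ p := by
      intro l hl
      have hl0 : 0 < l := lt_of_lt_of_le ha hl.1
      have h1 := hGk M le_rfl l hl0
      have h2 : |Real.log l| ^ ℓ ≤ (La + Real.log b) ^ ℓ :=
        pow_le_pow_left₀ (abs_nonneg _) (hLb l hl) ℓ
      calc ‖iteratedDeriv M G l‖ ≤ D * (l ^ (β - (M:ℝ)) * |Real.log l| ^ ℓ) := h1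
        _ ≤ D * (l ^ (β - (M:ℝ)) * (La + Real.log b) ^ ℓ) := by
            apply mul_le_mul_of_nonneg_left
              (mul_le_mul_of_nonneg_left h2 (Real.rpow_nonneg hl0.le _)) hD.le
        _ = D * (La + Real.log b) ^ ℓ * l ^ p := by rw [hpdef]; ring
    have hcont1 : ContinuousOn (fun l : ℝ => ‖iteratedDeriv M G l‖) (Icc a b) :=
      ((aux_contOn_iteratedDeriv hG M).mono hIccIoi).norm
    have hint1 : IntervalIntegrable (fun l : ℝ => ‖iteratedDeriv M G l‖) volume a b := by
      apply ContinuousOn.intervalIntegrable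
      rwa [Set.uIcc_of_le hab]
    have hcont2 : ContinuousOn (fun l : ℝ => D * (La + Real.log b) ^ ℓ * l ^ p) (Icc a b) := by
      apply continuousOn_const.mul
      intro x hx
      exact (Real.continuousAt_rpow_const x p (Or.inl (ne_of_gt (hIccIoi hx)))).continuousWithinAt
    have hint2 : IntervalIntegrable (fun l : ℝ => D * (La + Real.log b) ^ ℓ * l ^ p) volume a b := by
      apply ContinuousOn.intervalIntegrable
      rwa [Set.uIcc_of_le hab]
    have hmono2 := intervalIntegral.integral_mono_on hab hint1 hint2 htail_pt
    have hval2 : (∫ l in a..b, D * (La + Real.log b) ^ ℓ * l ^ p)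
        = D * (La + Real.log b) ^ ℓ * ∫ l in a..b, l ^ p :=
      intervalIntegral.integral_const_mul _ _
    have hrint : (∫ l in a..b, l ^ p) = (b ^ (p+1) - a ^ (p+1)) / (p+1) := by
      apply integral_rpow
      refine Or.inr ⟨by linarith, ?_⟩
      rw [Set.uIcc_of_le hab]
      intro h
      exact absurd h.1 (not_le.mpr ha)
    have hbp0 : 0 < b ^ (p+1) := Real.rpow_pos_of_pos hb0 _
    have hrle : (b ^ (p+1) - a ^ (p+1)) / (p+1) ≤ a ^ (p+1) / ((M:ℝ) - β - 1) := by
      have hneg : p + 1 = -((M:ℝ) - β - 1) := by simp only [hpdef]; ring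
      have hd : (b ^ (p+1) - a ^ (p+1)) / (p+1)
          = (a ^ (p+1) - b ^ (p+1)) / ((M:ℝ) - β - 1) := by
        rw [div_eq_div_iff (ne_of_lt hp1) (ne_of_gt hMβ)]
        linear_combination (a ^ (p+1) - b ^ (p+1)) * hneg
      rw [hd]
      gcongr
      linarith
    have hLbl0 : 0 ≤ D * (La + Real.log b) ^ ℓ :=
      mul_nonneg hD.le (pow_nonneg (by linarith) _)
    have hcomb2 : a ^ (((M:ℕ)):ℝ) * a ^ (p+1) = a ^ (β+1) := by
      rw [← Real.rpow_add ha]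
      congr 1
      simp only [hpdef]
      ring
    have htail : |ρ|⁻¹ ^ M * (∫ l in a..b, ‖iteratedDeriv M G l‖)
        ≤ D * (La + Real.log b) ^ ℓ / ((M:ℝ) - β - 1) * a ^ (β+1) := by
      have haM : |ρ|⁻¹ ^ M = a ^ ((M:ℕ) : ℝ) := by
        rw [hadef, Real.rpow_natCast]
      have hc1 : (∫ l in a..b, ‖iteratedDeriv M G l‖)
          ≤ D * (La + Real.log b) ^ ℓ * (a ^ (p+1) / ((M:ℝ) - β - 1)) := by
        refine hmono2.trans ?_
        rw [hval2]
        apply mul_le_mul_of_nonneg_left _ hLbl0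
        rw [hrint]
        exact hrle
      have haMnn : (0:ℝ) ≤ a ^ ((M:ℕ) : ℝ) := Real.rpow_nonneg ha.le _
      calc |ρ|⁻¹ ^ M * (∫ l in a..b, ‖iteratedDeriv M G l‖)
          ≤ a ^ ((M:ℕ) : ℝ) * (D * (La + Real.log b) ^ ℓ * (a ^ (p+1) / ((M:ℝ) - β - 1))) := by
            rw [haM]
            exact mul_le_mul_of_nonneg_left hc1 haMnn
        _ = D * (La + Real.log b) ^ ℓ / ((M:ℝ) - β - 1) * (a ^ (((M:ℕ)):ℝ) * a ^ (p+1)) := by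
            ring
        _ = D * (La + Real.log b) ^ ℓ / ((M:ℝ) - β - 1) * a ^ (β+1) := by rw [hcomb2]
    -- the interval-integral bound
    have hT2 := ibp_iter hρ0 hRb M G hG hGR a ha hab
    have hT2' : ‖∫ lam in a..b, Complex.exp (Complex.I * ρ * lam) * G lam‖
        ≤ M * (D * (a ^ (β+1) * La ^ ℓ))
          + D * (La + Real.log b) ^ ℓ / ((M:ℝ) - β - 1) * a ^ (β+1) :=
      hT2.trans (add_le_add hsum htail)
    have hT1 := hsmall a ha ha1
    -- convert to jap quantities
    have hcstQ0 : 0 ≤ cst * Q := by positivity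
    have he1 : D * K * (a ^ (β+1) * (1 + La ^ ℓ)) ≤ C1 * Q * P ^ ℓ := by
      have h12 : 1 + La ^ ℓ ≤ 2 * P ^ ℓ := by linarith [hLaPl, hPl1]
      have hx : a ^ (β+1) * (1 + La ^ ℓ) ≤ (cst * Q) * (2 * P ^ ℓ) :=
        mul_le_mul hZ h12 (by linarith) hcstQ0
      calc D * K * (a ^ (β+1) * (1 + La ^ ℓ)) ≤ D * K * ((cst * Q) * (2 * P ^ ℓ)) :=
            mul_le_mul_of_nonneg_left hx (by positivity)
        _ = C1 * Q * P ^ ℓ := by rw [hC1def]; ring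
    have he2 : M * (D * (a ^ (β+1) * La ^ ℓ)) ≤ C2 * Q * P ^ ℓ := by
      have hx : a ^ (β+1) * La ^ ℓ ≤ (cst * Q) * P ^ ℓ :=
        mul_le_mul hZ hLaPl hLal0 hcstQ0
      calc (M:ℝ) * (D * (a ^ (β+1) * La ^ ℓ)) ≤ (M:ℝ) * (D * ((cst * Q) * P ^ ℓ)) := by
            apply mul_le_mul_of_nonneg_left (mul_le_mul_of_nonneg_left hx hD.le)
              (Nat.cast_nonneg M)
        _ = C2 * Q * P ^ ℓ := by rw [hC2def]; ring
    have he3 : D * (La + Real.log b) ^ ℓ / ((M:ℝ) - β - 1) * a ^ (β+1)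
        ≤ C3 * Q * P ^ ℓ := by
      have hLbP : (La + Real.log b) ^ ℓ ≤ (1 + Real.log b) ^ ℓ * P ^ ℓ := by
        have h1 : La + Real.log b ≤ (1 + Real.log b) * P := by
          have h2 : Real.log b * 1 ≤ Real.log b * P :=
            mul_le_mul_of_nonneg_left hP1 hlogb.le
          have h3 : (1 + Real.log b) * P = P + Real.log b * P := by ring
          rw [h3]
          linarith
        calc (La + Real.log b) ^ ℓ ≤ ((1 + Real.log b) * P) ^ ℓ :=
              pow_le_pow_left₀ (by linarith) h1 ℓ
          _ = (1 + Real.log b) ^ ℓ * P ^ ℓ := mul_pow _ _ _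
      have hx : D * (La + Real.log b) ^ ℓ / ((M:ℝ) - β - 1)
          ≤ D * ((1 + Real.log b) ^ ℓ * P ^ ℓ) / ((M:ℝ) - β - 1) := by
        apply div_le_div_of_nonneg_right ?_ hMβ.le
        exact mul_le_mul_of_nonneg_left hLbP hD.le
      calc D * (La + Real.log b) ^ ℓ / ((M:ℝ) - β - 1) * a ^ (β+1)
          ≤ (D * ((1 + Real.log b) ^ ℓ * P ^ ℓ) / ((M:ℝ) - β - 1)) * (cst * Q) := by
            apply mul_le_mul hx hZ hA0
            positivity
        _ = C3 * Q * P ^ ℓ := by rw [hC3def]; ring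
    calc ‖∫ lam in Set.Ioi (0:ℝ), Complex.exp (Complex.I * ρ * lam) * G lam‖
        = ‖(∫ lam in Ioc (0:ℝ) a, Complex.exp (Complex.I * ρ * lam) * G lam)
            + ∫ lam in a..b, Complex.exp (Complex.I * ρ * lam) * G lam‖ := by
          rw [hIoi, hsplit]
      _ ≤ ‖∫ lam in Ioc (0:ℝ) a, Complex.exp (Complex.I * ρ * lam) * G lam‖
            + ‖∫ lam in a..b, Complex.exp (Complex.I * ρ * lam) * G lam‖ := norm_add_le _ _
      _ ≤ D * K * (a ^ (β+1) * (1 + La ^ ℓ))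
            + (M * (D * (a ^ (β+1) * La ^ ℓ))
              + D * (La + Real.log b) ^ ℓ / ((M:ℝ) - β - 1) * a ^ (β+1)) :=
          add_le_add hT1 hT2'
      _ ≤ C1 * Q * P ^ ℓ + (C2 * Q * P ^ ℓ + C3 * Q * P ^ ℓ) :=
          add_le_add he1 (add_le_add he2 he3)
      _ = (C1 + C2 + C3) * (Q * P ^ ℓ) := by ring
      _ ≤ (C0 + C1 + C2 + C3) * (Q * P ^ ℓ) := by
          have hQP : 0 ≤ Q * P ^ ℓ := mul_nonneg hQ0.le hPl0
          apply mul_le_mul_of_nonneg_right _ hQP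
          linarith
      _ = (C0 + C1 + C2 + C3) * Q * P ^ ℓ := by ring

end Main

/-- Logarithmic variant of the integration-by-parts bound: if `F` is smooth on
`(0,∞)` with `|F^(k)(λ)| ≤ C λ^(β−k)|log λ|^ℓ` for `0 ≤ k ≤ M` on the support of the cutoff
`Φ̃`, with `β > −1` and `M > β+1`, then
`|∫_0^∞ e^{iρλ} F(λ) Φ̃(λ) dλ| ≲ ⟨ρ⟩^(−β−1) ⟨log⟨ρ⟩⟩^ℓ`. -/
theorem IBP_bound_log
    (F : ℝ → ℂ) (Φ : ℝ → ℝ) (β : ℝ) (ℓ M : ℕ) (C Cφ : ℝ)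
    (hβ : -1 < β) (hM : β + 1 < (M : ℝ))
    (hC : 0 < C) (hCφ : 0 < Cφ)
    (hF : ContDiffOn ℝ (⊤ : ℕ∞) F (Set.Ioi 0))
    (hΦsmooth : ContDiff ℝ (⊤ : ℕ∞) Φ) (hΦsupp : HasCompactSupport Φ)
    (hFk : ∀ k ≤ M, ∀ lam : ℝ, 0 < lam → lam ∈ tsupport Φ →
        ‖iteratedDeriv k F lam‖ ≤ C * lam ^ (β - (k : ℝ)) * |Real.log lam| ^ ℓ)
    (hΦk : ∀ k ≤ M, ∀ lam : ℝ, 0 < lam →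
        |iteratedDeriv k Φ lam| ≤ Cφ * lam ^ (-(k : ℝ))) :
    ∃ C' : ℝ, 0 < C' ∧ ∀ ρ : ℝ,
      ‖∫ lam in Set.Ioi (0 : ℝ),
          Complex.exp (Complex.I * ρ * lam) * F lam * (Φ lam : ℂ)‖
        ≤ C' * jap ρ ^ (-β - 1) * jap (Real.log (jap ρ)) ^ ℓ := by
  have hΨ : ContDiff ℝ (⊤ : ℕ∞) (fun x : ℝ => ((Φ x : ℂ))) :=
    Complex.ofRealCLM.contDiff.comp hΦsmooth
  have hG : ContDiffOn ℝ (⊤ : ℕ∞) (fun x : ℝ => F x * (Φ x : ℂ)) (Set.Ioi 0) :=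
    hF.mul hΨ.contDiffOn
  obtain ⟨r, hr⟩ := hΦsupp.isCompact.isBounded.subset_closedBall 0
  have hGR : ∀ l, max r 1 < l → F l * ((Φ l : ℝ) : ℂ) = 0 := by
    intro l hl
    have hnot : l ∉ tsupport Φ := by
      intro hmem
      have h1 := hr hmem
      rw [Metric.mem_closedBall, Real.dist_eq, sub_zero] at h1
      have h2 : l ≤ |l| := le_abs_self l
      have h3 : r ≤ max r 1 := le_max_left r 1
      linarith
    rw [image_eq_zero_of_notMem_tsupport hnot]
    simp
  have hGk := aux_G_bound F Φ β ℓ M C Cφ hC hCφ hF hΦsmooth hFk hΦk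
  obtain ⟨C', hC', hbound⟩ := main_est (fun x => F x * (Φ x : ℂ)) β ℓ M (C * Cφ * 2 ^ M)
    hβ hM (by positivity) hG (max r 1) (le_max_right r 1) hGR hGk
  refine ⟨C', hC', ?_⟩
  intro ρ
  have heq : (∫ lam in Set.Ioi (0:ℝ),
        Complex.exp (Complex.I * ρ * lam) * F lam * (Φ lam : ℂ))
      = ∫ lam in Set.Ioi (0:ℝ),
        Complex.exp (Complex.I * ρ * lam) * (F lam * (Φ lam : ℂ)) := by
    simp only [mul_assoc]
  rw [heq]
  exact hbound ρ
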